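/- Let λ ∈ ℝ and let r : I → ℝ³∖{0} be a solution of the Poincaré problem in ℝ³∖{0} with Poincaré vector L. Then ⟨r(t), L(t)⟩ = λ |r(t)| for all t ∈ I; in particular, if r is non-colliding (so that L is a nonzero constant vector), the cosine of the angle between r(t) and L, namely ⟨r(t), L⟩/(|r(t)||L|) = λ/|L|, is constant, so r(I) lies on a cone with vertex at the origin directed along L. -/

import Mathlib

/-!
Along a solution, `d/dt (r × ṙ) = r × r̈ = λ |r|⁻³ r × (r × ṙ) = λ |r|⁻³ (⟨r, ṙ⟩ r - |r|² ṙ)`,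
which is exactly minus the derivative of `λ r / |r|`; so the Poincaré vector is constant on the
interval. Since `r × ṙ ⊥ r`, its component along `r` is `λ |r|`. If it vanished, then `λ = 0` and
`r × ṙ = 0` everywhere, so the curve would be colliding.
-/

open scoped InnerProductSpace

/-- The cross product on Euclidean 3-space. -/
noncomputable def cross3 (x y : EuclideanSpace ℝ (Fin 3)) : EuclideanSpace ℝ (Fin 3) :=
  (WithLp.equiv 2 (Fin 3 → ℝ)).symm
    ![x 1 * y 2 - x 2 * y 1, x 2 * y 0 - x 0 * y 2, x 0 * y 1 - x 1 * y 0]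

local notation "ℝ³" => EuclideanSpace ℝ (Fin 3)

open WithLp Matrix

theorem cross3_eq_toLp_crossProduct (x y : ℝ³) :
    cross3 x y = toLp 2 (crossProduct (ofLp x) (ofLp y)) := by
  ext i; fin_cases i <;> simp [cross3, cross_apply]

theorem inner_self_cross3 (x y : ℝ³) : ⟪x, cross3 x y⟫_ℝ = 0 := by
  rw [cross3_eq_toLp_crossProduct, EuclideanSpace.inner_eq_star_dotProduct, star_trivial,
    ofLp_toLp, dotProduct_comm, dot_self_cross]

theorem cross3_self (x : ℝ³) : cross3 x x = 0 := by
  simp [cross3_eq_toLp_crossProduct]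

theorem cross3_smul_right (x y : ℝ³) (c : ℝ) : cross3 x (c • y) = c • cross3 x y := by
  simp [cross3_eq_toLp_crossProduct]

theorem cross3_cross3_self (x y : ℝ³) : cross3 x (cross3 x y) = ⟪x, y⟫_ℝ • x - ‖x‖ ^ 2 • y := by
  rw [cross3_eq_toLp_crossProduct, cross3_eq_toLp_crossProduct, ofLp_toLp,
    cross_cross_eq_smul_sub_smul', ← real_inner_self_eq_norm_sq,
    EuclideanSpace.inner_eq_star_dotProduct, EuclideanSpace.inner_eq_star_dotProduct]
  simp [dotProduct_comm]

theorem exists_eq_smul_of_cross3_eq_zero {x y : ℝ³} (hx : x ≠ 0) (h : cross3 x y = 0) :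
    ∃ c : ℝ, y = c • x := by
  rw [cross3_eq_toLp_crossProduct, toLp_eq_zero, ← not_ne_iff,
    crossProduct_ne_zero_iff_linearIndependent,
    LinearIndependent.pair_iff' ((ofLp_eq_zero 2).not.2 hx), not_forall_not] at h
  obtain ⟨c, hc⟩ := h
  exact ⟨c, by rw [← toLp_ofLp 2 y, ← hc]; rfl⟩

noncomputable def cross3CLM : ℝ³ →L[ℝ] ℝ³ →L[ℝ] ℝ³ :=
  LinearMap.toContinuousLinearMap <| LinearMap.toContinuousLinearMap.toLinearMap ∘ₗ
    LinearMap.mk₂ ℝ cross3 (by simp [cross3_eq_toLp_crossProduct])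
      (by simp [cross3_eq_toLp_crossProduct]) (by simp [cross3_eq_toLp_crossProduct])
      (by simp [cross3_eq_toLp_crossProduct])

theorem HasDerivAt.cross3 {u v : ℝ → ℝ³} {u' v' : ℝ³} {t : ℝ} (hu : HasDerivAt u u' t)
    (hv : HasDerivAt v v' t) :
    HasDerivAt (fun s => cross3 (u s) (v s)) (cross3 (u t) v' + cross3 u' (v t)) t :=
  cross3CLM.hasDerivAt_of_bilinear (fun _ => hu) (fun _ => hv)

theorem HasDerivAt.norm {F : Type*} [NormedAddCommGroup F] [InnerProductSpace ℝ F] {f : ℝ → F}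
    {f' : F} {t : ℝ} (hf : HasDerivAt f f' t) (h0 : f t ≠ 0) :
    HasDerivAt (fun s => ‖f s‖) (⟪f t, f'⟫_ℝ / ‖f t‖) t := by
  have hsq := hf.norm_sq.sqrt (by positivity)
  simp only [Real.sqrt_sq (norm_nonneg _)] at hsq
  convert hsq using 1
  field_simp

theorem Convex.eq_of_forall_hasDerivAt_zero {E : Type*} [NormedAddCommGroup E] [NormedSpace ℝ E]
    {f : ℝ → E} {s : Set ℝ} (hs : Convex ℝ s) (hf : ∀ x ∈ s, HasDerivAt f 0 x) {x y : ℝ}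
    (hx : x ∈ s) (hy : y ∈ s) : f x = f y := by
  have := hs.norm_image_sub_le_of_norm_hasDerivWithin_le (fun z hz => (hf z hz).hasDerivWithinAt)
    (fun _ _ => norm_zero.le) hx hy
  rw [zero_mul, norm_le_zero_iff, sub_eq_zero] at this
  exact this.symm

noncomputable def poincareVector (lam : ℝ) (x v : ℝ³) : ℝ³ :=
  cross3 x v + (lam / ‖x‖) • x

theorem inner_poincareVector (lam : ℝ) (x v : ℝ³) :
    ⟪x, poincareVector lam x v⟫_ℝ = lam * ‖x‖ := by
  rw [poincareVector, inner_add_right, inner_self_cross3, inner_smul_right,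
    real_inner_self_eq_norm_sq]
  rcases eq_or_ne x 0 with rfl | hx
  · simp
  field_simp [norm_ne_zero_iff.2 hx]
  ring

theorem poincareVector_ne_zero {x v : ℝ³} (hx : x ≠ 0) (hv : ∀ c : ℝ, v ≠ c • x) (lam : ℝ) :
    poincareVector lam x v ≠ 0 := by
  intro h0
  have hlam : lam = 0 := by
    simpa [hx, h0] using (inner_poincareVector lam x v).symm
  obtain ⟨c, hc⟩ := exists_eq_smul_of_cross3_eq_zero hx (by simpa [poincareVector, hlam] using h0)
  exact hv c hc

theorem hasDerivAt_poincareVector {lam t : ℝ} {r r' : ℝ → ℝ³} (hr : r t ≠ 0)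
    (hr' : HasDerivAt r (r' t) t)
    (hr'' : HasDerivAt r' ((lam / ‖r t‖ ^ 3) • cross3 (r t) (r' t)) t) :
    HasDerivAt (fun s => poincareVector lam (r s) (r' s)) 0 t := by
  have hnorm : ‖r t‖ ≠ 0 := norm_ne_zero_iff.2 hr
  have hcoef := (hasDerivAt_const t lam).fun_div (hr'.norm hr) hnorm
  refine ((hr'.cross3 hr'').add (hcoef.smul hr')).congr_deriv ?_
  rw [cross3_smul_right, cross3_cross3_self, cross3_self]
  match_scalars <;> field_simp <;> ring

theorem poincare_inner_L_eq_general
    (lam : ℝ) (I : Set ℝ) (hIconn : I.OrdConnected)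
    (r r' r'' : ℝ → EuclideanSpace ℝ (Fin 3))
    (hne : ∀ t ∈ I, r t ≠ 0)
    (hd1 : ∀ t ∈ I, HasDerivAt r (r' t) t)
    (hd2 : ∀ t ∈ I, HasDerivAt r' (r'' t) t)
    (hode : ∀ t ∈ I, r'' t = (lam / ‖r t‖ ^ 3) • cross3 (r t) (r' t))
    (L : ℝ → EuclideanSpace ℝ (Fin 3))
    (hL : ∀ t, L t = cross3 (r t) (r' t) + (lam / ‖r t‖) • r t) :
    (∀ t ∈ I, ⟪r t, L t⟫_ℝ = lam * ‖r t‖) ∧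
      (¬ (∀ t ∈ I, ∃ c : ℝ, r' t = c • r t) →
        (∀ s ∈ I, ∀ t ∈ I, L s = L t) ∧
        (∀ t ∈ I, L t ≠ 0 ∧
          ⟪r t, L t⟫_ℝ / (‖r t‖ * ‖L t‖) = lam / ‖L t‖)) := by
  obtain rfl : L = fun t => poincareVector lam (r t) (r' t) := funext hL
  refine ⟨fun t _ => inner_poincareVector lam (r t) (r' t), fun hcolliding => ?_⟩
  have hconst : ∀ s ∈ I, ∀ t ∈ I,
      poincareVector lam (r s) (r' s) = poincareVector lam (r t) (r' t) :=
    fun s hs t ht => hIconn.convex.eq_of_forall_hasDerivAt_zero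
      (fun u hu => hasDerivAt_poincareVector (hne u hu) (hd1 u hu) (hode u hu ▸ hd2 u hu)) hs ht
  obtain ⟨t₀, ht₀, hcol⟩ : ∃ t₀ ∈ I, ∀ c : ℝ, r' t₀ ≠ c • r t₀ := by simpa using hcolliding
  refine ⟨hconst, fun t ht => ?_⟩
  have hL : poincareVector lam (r t) (r' t) ≠ 0 :=
    hconst t₀ ht₀ t ht ▸ poincareVector_ne_zero (hne t₀ ht₀) hcol lam
  refine ⟨hL, ?_⟩
  rw [inner_poincareVector]
  field_simp [hne t ht, hL]

/-- For a solution `r` of the Poincaré problem in `ℝ³ ∖ {0}` with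
Poincaré vector `L(t) = r(t) × ṙ(t) + λ r(t)/|r(t)|`, we have `⟨r(t), L(t)⟩ = λ |r(t)|`
for all `t ∈ I`; in particular, if `r` is non-colliding, then `L` is a nonzero constant
vector and the cosine of the angle between `r(t)` and `L`, namely
`⟨r(t), L⟩/(|r(t)||L|) = λ/|L|`, is constant, so `r(I)` lies on a cone with vertex at
the origin directed along `L`. -/
theorem poincare_inner_L_eq
    (lam : ℝ) (I : Set ℝ) (hIopen : IsOpen I) (hIconn : I.OrdConnected)
    (r r' r'' : ℝ → EuclideanSpace ℝ (Fin 3))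
    (hne : ∀ t ∈ I, r t ≠ 0)
    (hd1 : ∀ t ∈ I, HasDerivAt r (r' t) t)
    (hd2 : ∀ t ∈ I, HasDerivAt r' (r'' t) t)
    (hC2 : ContinuousOn r'' I)
    (hode : ∀ t ∈ I, r'' t = (lam / ‖r t‖ ^ 3) • cross3 (r t) (r' t))
    (L : ℝ → EuclideanSpace ℝ (Fin 3))
    (hL : ∀ t, L t = cross3 (r t) (r' t) + (lam / ‖r t‖) • r t) :
    (∀ t ∈ I, ⟪r t, L t⟫_ℝ = lam * ‖r t‖) ∧
      (¬ (∀ t ∈ I, ∃ c : ℝ, r' t = c • r t) →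
        (∀ s ∈ I, ∀ t ∈ I, L s = L t) ∧
        (∀ t ∈ I, L t ≠ 0 ∧
          ⟪r t, L t⟫_ℝ / (‖r t‖ * ‖L t‖) = lam / ‖L t‖)) :=
  poincare_inner_L_eq_general lam I hIconn r r' r'' hne hd1 hd2 hode L hL
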